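/- arXiv:1909.01237 — 3 statements merged into one kernel-verified Lean document; each statement's English description precedes it below -/
import Mathlib

section
/- If ψ : ℝⁿ → ℂ is a continuous negative definite function and there exists η ≠ 0 with ψ(η) = 0, then ψ is periodic with period η, i.e., ψ(ξ + η) = ψ(ξ) for all ξ ∈ ℝⁿ. -/
/-! Differentiating the positive definiteness of `exp (-t ψ)` at `t = 0` shows that `ψ` is
hermitian and conditionally negative definite. Testing the latter on the points `0, ξ, η` with
weights `-(1 + s), 1, s` gives, when `ψ η = 0`, `Re (s̄ (ψ (ξ - η) - ψ ξ)) ≤ Re ψ ξ` for every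
`s ∈ ℂ`, which forces `ψ (ξ - η) = ψ ξ`. -/

open scoped ComplexOrder BigOperators

/-- A continuous negative definite function: continuous, vanishing at the origin,
and such that `ξ ↦ exp (-t ψ ξ)` is positive definite for every `t ≥ 0`. -/
def IsCNDF {d : ℕ} (ψ : EuclideanSpace ℝ (Fin d) → ℂ) : Prop :=
  Continuous ψ ∧ ψ 0 = 0 ∧
    ∀ t : ℝ, 0 ≤ t → ∀ (m : ℕ) (ξ : Fin m → EuclideanSpace ℝ (Fin d)) (c : Fin m → ℂ),
      0 ≤ ∑ j, ∑ k, c j * (starRingEnd ℂ) (c k) * Complex.exp (-(t : ℂ) * ψ (ξ j - ξ k))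

open Complex ComplexConjugate

theorem HasDerivWithinAt.nonneg_of_le_right {E : Type*} [NormedAddCommGroup E] [NormedSpace ℝ E]
    [PartialOrder E] [IsOrderedAddMonoid E] [OrderClosedTopology E] [PosSMulMono ℝ E]
    {f : ℝ → E} {f' : E} {x : ℝ} (hf : HasDerivWithinAt f f' (Set.Ioi x) x)
    (hle : ∀ t, x < t → f x ≤ f t) : 0 ≤ f' := by
  refine ge_of_tendsto ((hasDerivWithinAt_iff_tendsto_slope' Set.self_notMem_Ioi).mp hf) ?_
  filter_upwards [self_mem_nhdsWithin] with t (ht : x < t)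
  rw [slope_def_module]
  exact smul_nonneg (inv_nonneg.mpr (sub_nonneg.mpr ht.le)) (sub_nonneg.mpr (hle t ht))

theorem hasDerivAt_cexp_neg_ofReal_mul (w : ℂ) :
    HasDerivAt (fun t : ℝ ↦ cexp (-(t : ℂ) * w)) (-w) 0 := by
  simpa using (((hasDerivAt_id (0 : ℝ)).ofReal_comp).neg.mul_const w).cexp

def IsPositiveDefinite {E : Type*} [AddGroup E] (φ : E → ℂ) : Prop :=
  ∀ (m : ℕ) (ξ : Fin m → E) (c : Fin m → ℂ), 0 ≤ ∑ j, ∑ k, c j * conj (c k) * φ (ξ j - ξ k)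

theorem IsPositiveDefinite.map_neg {E : Type*} [AddGroup E] {φ : E → ℂ}
    (hφ : IsPositiveDefinite φ) (x : E) : φ (-x) = conj (φ x) := by
  have him : ∀ z : ℂ, (φ 0 + conj z * φ (-x) + (z * φ x + z * conj z * φ 0)).im = 0 := fun z ↦
    (le_def.mp (by simpa [Fin.sum_univ_two] using hφ 2 ![0, x] ![1, z])).2.symm
  have h1 := him 1
  have h2 := him (-1)
  have h3 := him I
  have h4 := him (-I)
  simp only [map_one, one_mul, mul_one, add_im, _root_.map_neg, neg_mul, mul_neg, neg_neg, neg_im,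
    conj_I, I_mul_I, mul_im, I_re, zero_mul, I_im, zero_add] at h1 h2 h3 h4
  apply Complex.ext
  · rw [conj_re]; linarith
  · rw [conj_im]; linarith

variable {d : ℕ} {ψ : EuclideanSpace ℝ (Fin d) → ℂ}

theorem IsCNDF.isPositiveDefinite_exp (hψ : IsCNDF ψ) {t : ℝ} (ht : 0 ≤ t) :
    IsPositiveDefinite fun ξ ↦ cexp (-(t : ℂ) * ψ ξ) :=
  hψ.2.2 t ht

theorem IsCNDF.map_neg (hψ : IsCNDF ψ) (x : EuclideanSpace ℝ (Fin d)) :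
    ψ (-x) = conj (ψ x) := by
  set g : ℝ → ℂ := fun t ↦ cexp (-(t : ℂ) * ψ (-x)) - cexp (-(t : ℂ) * conj (ψ x))
  have hg : ∀ t, 0 ≤ t → g t = 0 := fun t ht ↦ by
    have h := (hψ.isPositiveDefinite_exp ht).map_neg x
    rw [show g t = _ - _ from rfl, h, ← exp_conj, map_mul, _root_.map_neg, conj_ofReal, sub_self]
  have hg' : HasDerivAt g (-ψ (-x) - -conj (ψ x)) 0 :=
    (hasDerivAt_cexp_neg_ofReal_mul _).sub (hasDerivAt_cexp_neg_ofReal_mul _)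
  have h₁ := hg'.hasDerivWithinAt.nonneg_of_le_right fun t ht ↦ by rw [hg 0 le_rfl, hg t ht.le]
  have h₂ := hg'.neg.hasDerivWithinAt.nonneg_of_le_right fun t ht ↦ by
    simp only [Pi.neg_apply, hg 0 le_rfl, hg t ht.le, le_refl]
  linear_combination -le_antisymm (neg_nonneg.mp h₂) h₁

theorem IsCNDF.sum_sum_mul_nonpos (hψ : IsCNDF ψ) {m : ℕ} (ξ : Fin m → EuclideanSpace ℝ (Fin d))
    (c : Fin m → ℂ) (hc : ∑ j, c j = 0) :
    ∑ j, ∑ k, c j * conj (c k) * ψ (ξ j - ξ k) ≤ 0 := by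
  set f : ℝ → ℂ := fun t ↦ ∑ j, ∑ k, c j * conj (c k) * cexp (-(t : ℂ) * ψ (ξ j - ξ k))
  have hf : HasDerivAt f (∑ j, ∑ k, c j * conj (c k) * -ψ (ξ j - ξ k)) 0 :=
    HasDerivAt.fun_sum fun j _ ↦ HasDerivAt.fun_sum fun k _ ↦
      (hasDerivAt_cexp_neg_ofReal_mul _).const_mul _
  have hf0 : f 0 = 0 := by
    simp [f, ← Finset.sum_mul_sum, hc]
  have := hf.hasDerivWithinAt.nonneg_of_le_right fun t ht ↦ hf0 ▸ hψ.2.2 t ht.le m ξ c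
  simpa [Finset.sum_neg_distrib] using this

theorem Complex.eq_zero_of_forall_re_conj_mul_le {w : ℂ} {a : ℝ}
    (h : ∀ s : ℂ, (conj s * w).re ≤ a) : w = 0 := by
  by_contra hw
  have hpos : 0 < normSq w := normSq_pos.mpr hw
  have := h (((a + 1) / normSq w : ℝ) * w)
  rw [map_mul, conj_ofReal, mul_assoc, re_ofReal_mul, ← normSq_eq_conj_mul_self, ofReal_re,
    div_mul_cancel₀ _ hpos.ne'] at this
  linarith

theorem IsCNDF.re_conj_mul_sub_le (hψ : IsCNDF ψ) {η : EuclideanSpace ℝ (Fin d)} (hψη : ψ η = 0)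
    (ξ : EuclideanSpace ℝ (Fin d)) (s : ℂ) : (conj s * (ψ (ξ - η) - ψ ξ)).re ≤ (ψ ξ).re := by
  have hψη' : ψ (η - ξ) = conj (ψ (ξ - η)) := by rw [← neg_sub, hψ.map_neg]
  have h : -((1 + s) * conj (ψ ξ)) - (1 + conj s) * ψ ξ + conj s * ψ (ξ - η)
      + s * conj (ψ (ξ - η)) ≤ 0 := by
    convert hψ.sum_sum_mul_nonpos ![0, ξ, η] ![-(1 + s), 1, s] (by simp [Fin.sum_univ_three])
      using 1
    simp only [Fin.sum_univ_three, Matrix.cons_val_zero, Matrix.cons_val_one, Matrix.cons_val,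
      sub_self, sub_zero, zero_sub, hψ.2.1, hψη, hψ.map_neg, hψη', map_add, _root_.map_neg,
      map_one, map_zero, mul_zero]
    ring
  have hre := (le_def.mp h).1
  simp only [add_re, add_im, sub_re, sub_im, neg_re, mul_re, one_re, one_im, conj_re, conj_im,
    zero_re] at hre ⊢
  linear_combination hre / 2

theorem cndf_periodic_of_zero_general {d : ℕ} (ψ : EuclideanSpace ℝ (Fin d) → ℂ)
    (hψ : IsCNDF ψ) (η : EuclideanSpace ℝ (Fin d)) (hψη : ψ η = 0) :
    ∀ ξ : EuclideanSpace ℝ (Fin d), ψ (ξ + η) = ψ ξ := by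
  intro ξ
  have h := Complex.eq_zero_of_forall_re_conj_mul_le (hψ.re_conj_mul_sub_le hψη (ξ + η))
  rw [add_sub_cancel_right] at h
  linear_combination -h

theorem cndf_periodic_of_zero {d : ℕ} (ψ : EuclideanSpace ℝ (Fin d) → ℂ)
    (hψ : IsCNDF ψ) (η : EuclideanSpace ℝ (Fin d)) (hη : η ≠ 0) (hψη : ψ η = 0) :
    ∀ ξ : EuclideanSpace ℝ (Fin d), ψ (ξ + η) = ψ ξ :=
  cndf_periodic_of_zero_general ψ hψ η hψη
end

section
/- With ψ and ψₙ as in the truncated-Lévy-measure approximation (ψₙ has Lévy measure 𝟙_{Bₙ(0)}ν), the zero sets satisfy {ξ : ψ(ξ) = 0} = ⋂ₙ {ξ : ψₙ(ξ) = 0}. -/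
open MeasureTheory
noncomputable section

/-- The integrand in the Lévy–Khintchine formula. -/
def LKi {d : ℕ} (ξ x : EuclideanSpace ℝ (Fin d)) : ℂ :=
  1 - Complex.exp (Complex.I * ((inner ℝ x ξ : ℝ) : ℂ)) +
    Complex.I * ((inner ℝ x ξ : ℝ) : ℂ) *
      (Metric.ball (0 : EuclideanSpace ℝ (Fin d)) 1).indicator (fun _ => (1 : ℂ)) x

/-- The Lévy–Khintchine formula for the exponent with triplet `(b, Q, ν)`. -/
def LKform {d : ℕ} (b : EuclideanSpace ℝ (Fin d))
    (Q : EuclideanSpace ℝ (Fin d) →L[ℝ] EuclideanSpace ℝ (Fin d))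
    (ν : Measure (EuclideanSpace ℝ (Fin d))) (ξ : EuclideanSpace ℝ (Fin d)) : ℂ :=
  -Complex.I * ((inner ℝ b ξ : ℝ) : ℂ) + (1 / 2 : ℂ) * ((inner ℝ (Q ξ) ξ : ℝ) : ℂ) +
    ∫ x, LKi ξ x ∂ν

/-!
Since `Re (LKi ξ x) = 1 - cos ⟪x, ξ⟫ ≥ 0` and `Q` is positive semidefinite, `ψ ξ = 0` forces
`cos ⟪x, ξ⟫ = 1` for `ν`-a.e. `x`. Then `LKi ξ x` vanishes a.e. outside the unit ball, so
truncating `ν` to any ball `Bₙ(0)` with `n ≥ 1` does not change the exponent at `ξ`.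
Conversely `ψₙ ξ → ψ ξ` by dominated convergence, so `ψₙ ξ = 0` for all `n ≥ 1` gives `ψ ξ = 0`.
-/

open Filter Topology

section LevyKhintchine

variable {d : ℕ}

lemma LKi_re (ξ x : EuclideanSpace ℝ (Fin d)) :
    (LKi ξ x).re = 1 - Real.cos (inner ℝ x ξ) := by
  unfold LKi
  by_cases h : x ∈ Metric.ball (0 : EuclideanSpace ℝ (Fin d)) 1 <;>
    simp [h, Complex.exp_re, Complex.mul_re, Complex.mul_im]

lemma LKi_eq_zero_of_cos_eq_one {ξ x : EuclideanSpace ℝ (Fin d)}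
    (hcos : Real.cos (inner ℝ x ξ) = 1) (hx : x ∉ Metric.ball 0 1) : LKi ξ x = 0 := by
  have hsin : Real.sin (inner ℝ x ξ) = 0 := by
    nlinarith [Real.sin_sq_add_cos_sq (inner ℝ x ξ)]
  rw [LKi, mul_comm Complex.I, Complex.exp_mul_I, ← Complex.ofReal_cos, ← Complex.ofReal_sin,
    hcos, hsin, Set.indicator_of_notMem hx]
  simp

lemma LKform_re (b : EuclideanSpace ℝ (Fin d))
    (Q : EuclideanSpace ℝ (Fin d) →L[ℝ] EuclideanSpace ℝ (Fin d))
    {ν : Measure (EuclideanSpace ℝ (Fin d))} {ξ : EuclideanSpace ℝ (Fin d)}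
    (hint : Integrable (LKi ξ) ν) :
    (LKform b Q ν ξ).re = inner ℝ (Q ξ) ξ / 2 + ∫ x, (1 - Real.cos (inner ℝ x ξ)) ∂ν := by
  have hre := integral_re hint
  simp only [RCLike.re_to_complex, LKi_re] at hre
  simp only [LKform, Complex.add_re, Complex.mul_re, Complex.neg_re, Complex.neg_im,
    Complex.I_re, Complex.I_im, Complex.ofReal_re, Complex.ofReal_im, ← hre]
  norm_num
  ring

lemma ae_cos_eq_one_of_LKform_eq_zero {b : EuclideanSpace ℝ (Fin d)}
    {Q : EuclideanSpace ℝ (Fin d) →L[ℝ] EuclideanSpace ℝ (Fin d)}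
    (hQ : ∀ x, 0 ≤ (inner ℝ (Q x) x : ℝ))
    {ν : Measure (EuclideanSpace ℝ (Fin d))} {ξ : EuclideanSpace ℝ (Fin d)}
    (hint : Integrable (LKi ξ) ν) (hzero : LKform b Q ν ξ = 0) :
    ∀ᵐ x ∂ν, Real.cos (inner ℝ x ξ) = 1 := by
  have hnonneg : 0 ≤ fun x : EuclideanSpace ℝ (Fin d) => 1 - Real.cos (inner ℝ x ξ) :=
    fun x => sub_nonneg.mpr (Real.cos_le_one _)
  have hint_re : Integrable (fun x => 1 - Real.cos (inner ℝ x ξ)) ν := by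
    simpa only [RCLike.re_to_complex, LKi_re] using hint.re
  have hintegral : ∫ x, (1 - Real.cos (inner ℝ x ξ)) ∂ν = 0 := by
    have hre := LKform_re b Q hint
    rw [hzero, Complex.zero_re] at hre
    linarith [hQ ξ, integral_nonneg (μ := ν) hnonneg]
  filter_upwards [(integral_eq_zero_iff_of_nonneg hnonneg hint_re).mp hintegral] with x hx
  exact (sub_eq_zero.mp hx).symm

lemma LKform_restrict_eq_of_LKform_eq_zero {b : EuclideanSpace ℝ (Fin d)}
    {Q : EuclideanSpace ℝ (Fin d) →L[ℝ] EuclideanSpace ℝ (Fin d)}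
    (hQ : ∀ x, 0 ≤ (inner ℝ (Q x) x : ℝ))
    {ν : Measure (EuclideanSpace ℝ (Fin d))} {ξ : EuclideanSpace ℝ (Fin d)}
    (hint : Integrable (LKi ξ) ν) (hzero : LKform b Q ν ξ = 0)
    {s : Set (EuclideanSpace ℝ (Fin d))} (hs : Metric.ball 0 1 ⊆ s) :
    LKform b Q (ν.restrict s) ξ = LKform b Q ν ξ := by
  have hcompl : ∀ᵐ x ∂ν, x ∉ s → LKi ξ x = 0 := by
    filter_upwards [ae_cos_eq_one_of_LKform_eq_zero hQ hint hzero] with x hcos hx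
    exact LKi_eq_zero_of_cos_eq_one hcos (fun hball => hx (hs hball))
  rw [LKform, LKform, setIntegral_eq_integral_of_ae_compl_eq_zero hcompl]

lemma tendsto_LKform_restrict_ball (b : EuclideanSpace ℝ (Fin d))
    (Q : EuclideanSpace ℝ (Fin d) →L[ℝ] EuclideanSpace ℝ (Fin d))
    {ν : Measure (EuclideanSpace ℝ (Fin d))} {ξ : EuclideanSpace ℝ (Fin d)}
    (hint : Integrable (LKi ξ) ν) :
    Tendsto (fun n : ℕ => LKform b Q (ν.restrict (Metric.ball 0 n)) ξ) atTop
      (𝓝 (LKform b Q ν ξ)) := by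
  have hunion : ⋃ n : ℕ, Metric.ball (0 : EuclideanSpace ℝ (Fin d)) n = Set.univ :=
    Metric.iUnion_ball_nat 0
  have hmono : Monotone fun n : ℕ => Metric.ball (0 : EuclideanSpace ℝ (Fin d)) n :=
    fun m n hmn => Metric.ball_subset_ball (Nat.cast_le.mpr hmn)
  have hintegral := tendsto_setIntegral_of_monotone (f := LKi ξ)
    (fun _ => Metric.isOpen_ball.measurableSet) hmono (by rwa [hunion, integrableOn_univ])
  rw [hunion, setIntegral_univ] at hintegral
  exact tendsto_const_nhds.add hintegral

end LevyKhintchine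

theorem truncated_exponent_zero_sets_general {d : ℕ}
    (b : EuclideanSpace ℝ (Fin d))
    (Q : EuclideanSpace ℝ (Fin d) →L[ℝ] EuclideanSpace ℝ (Fin d))
    (hQ : ∀ x, 0 ≤ (inner ℝ (Q x) x : ℝ))
    (ν : Measure (EuclideanSpace ℝ (Fin d)))
    (hInt : ∀ ξ, Integrable (LKi ξ) ν)
    (ψ : EuclideanSpace ℝ (Fin d) → ℂ) (hψ : ∀ ξ, ψ ξ = LKform b Q ν ξ)
    (ψn : ℕ → EuclideanSpace ℝ (Fin d) → ℂ)
    (hψn : ∀ n ξ, ψn n ξ = LKform b Q (ν.restrict (Metric.ball 0 (n : ℝ))) ξ) :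
    {ξ | ψ ξ = 0} = ⋂ n ∈ Set.Ici (1 : ℕ), {ξ | ψn n ξ = 0} := by
  ext ξ
  simp only [Set.mem_ofPred_eq, Set.mem_iInter, Set.mem_Ici, hψ, hψn]
  constructor
  · intro hzero n hn
    rw [LKform_restrict_eq_of_LKform_eq_zero hQ (hInt ξ) hzero
      (Metric.ball_subset_ball (Nat.one_le_cast.mpr hn)), hzero]
  · intro hzero
    refine tendsto_nhds_unique (tendsto_LKform_restrict_ball b Q (hInt ξ)) ?_
    exact tendsto_const_nhds.congr' <|
      (eventually_ge_atTop 1).mono fun n hn => (hzero n hn).symm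

/-- The zero set of the exponent is the intersection of the zero sets of the
truncated exponents. -/
theorem truncated_exponent_zero_sets {d : ℕ}
    (b : EuclideanSpace ℝ (Fin d))
    (Q : EuclideanSpace ℝ (Fin d) →L[ℝ] EuclideanSpace ℝ (Fin d))
    (hQ : ∀ x, 0 ≤ (inner ℝ (Q x) x : ℝ))
    (ν : Measure (EuclideanSpace ℝ (Fin d)))
    (hν0 : ν {0} = 0)
    (hνlevy : ∫⁻ x, ENNReal.ofReal (min (‖x‖ ^ 2) 1) ∂ν < ⊤)
    (hInt : ∀ ξ, Integrable (LKi ξ) ν)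
    (ψ : EuclideanSpace ℝ (Fin d) → ℂ) (hψ : ∀ ξ, ψ ξ = LKform b Q ν ξ)
    (ψn : ℕ → EuclideanSpace ℝ (Fin d) → ℂ)
    (hψn : ∀ n ξ, ψn n ξ = LKform b Q (ν.restrict (Metric.ball 0 (n : ℝ))) ξ) :
    {ξ | ψ ξ = 0} = ⋂ n ∈ Set.Ici (1 : ℕ), {ξ | ψn n ξ = 0} :=
  truncated_exponent_zero_sets_general b Q hQ ν hInt ψ hψ ψn hψn
end
end

section
/- Let g be a Bernstein function with a = 0 and Lévy measure π whose support is not discrete. Then g(ζ) ≠ 0 for all ζ ∈ ℍ \ {0}; consequently, for any continuous negative definite ψ, the zero sets satisfy {g ∘ ψ = 0} = {ψ = 0}. -/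
open MeasureTheory

open scoped ComplexOrder BigOperators

/-- The (topological) support of a measure on ℝ. -/
def measSupport (π : Measure ℝ) : Set ℝ :=
  {x | ∀ U : Set ℝ, IsOpen U → x ∈ U → π U ≠ 0}

/-! If `Re ζ ≥ 0` and `s ≥ 0`, then `‖e^{-ζ s}‖ ≤ 1`, so the integrand `1 - e^{-ζ s}` has
nonnegative real part; hence `g ζ = 0` forces `e^{-ζ s} = 1`, i.e. `ζ s ∈ 2πiℤ`, for π-a.e. `s`.
For `ζ ≠ 0` this puts π-almost every `s`, and therefore the support of π, into the discrete group
`(2π / ‖ζ‖) ℤ`. For the zero sets, `Re ψ ≥ 0` comes from positive semidefiniteness of the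
`2 × 2` matrix `(e^{-ψ(ξⱼ - ξₖ)})` at the points `ξ, 0`. -/

open Complex

namespace Complex

theorem norm_exp_le_one {w : ℂ} (hw : w.re ≤ 0) : ‖exp w‖ ≤ 1 := by
  rw [norm_exp]; exact Real.exp_le_one_iff.2 hw

theorem eq_one_of_norm_le_one_of_re_eq_one {z : ℂ} (hz : ‖z‖ ≤ 1) (hre : z.re = 1) : z = 1 := by
  have hnorm : |z.re| = ‖z‖ := by
    rw [hre, abs_one]; exact le_antisymm (hre ▸ re_le_norm z) hz
  exact ext hre (abs_re_eq_norm.1 hnorm)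

theorem mem_zmultiples_of_exp_mul_eq_one {ζ : ℂ} (hζ : ζ ≠ 0) {s : ℝ} (h : exp (ζ * s) = 1) :
    s ∈ AddSubgroup.zmultiples (2 * Real.pi / ‖ζ‖) := by
  obtain ⟨n, hn⟩ := exp_eq_one_iff.1 h
  have hnorm : ‖ζ‖ * |s| = |(n : ℝ)| * (2 * Real.pi) := by
    simpa [abs_of_pos Real.pi_pos] using congrArg norm hn
  rw [← abs_mem_iff, AddSubgroup.mem_zmultiples_iff]
  refine ⟨|n|, ?_⟩
  rw [zsmul_eq_mul, Int.cast_abs]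
  field_simp
  linarith

theorem norm_le_one_of_forall_nonneg {a b : ℂ}
    (h : ∀ z : ℂ, 0 ≤ 1 + starRingEnd ℂ z * a + z * b + z * starRingEnd ℂ z) : ‖a‖ ≤ 1 := by
  -- `z = 1` and `z = I` make the form Hermitian (`b = conj a`); then `z = -a` gives `1 - ‖a‖² ≥ 0`.
  have h1 := (nonneg_iff.1 (h 1)).2
  have hI := (nonneg_iff.1 (h I)).2
  simp only [map_one, one_mul, mul_one, add_im, one_im, zero_add, add_zero, conj_I, neg_mul,
    mul_neg, I_mul_I, neg_neg, neg_im, mul_im, I_re, zero_mul, I_im] at h1 hI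
  have hb : b = starRingEnd ℂ a := ext (by rw [conj_re]; linarith) (by rw [conj_im]; linarith)
  have hquad : 1 + starRingEnd ℂ (-a) * a + -a * b + -a * starRingEnd ℂ (-a)
      = ((1 - normSq a : ℝ) : ℂ) := by
    rw [hb, ofReal_sub, ofReal_one, ← mul_conj]; simp only [map_neg]; ring
  have h2 := (nonneg_iff.1 (h (-a))).1
  rw [hquad, ofReal_re, normSq_eq_norm_sq] at h2
  nlinarith [norm_nonneg a]

end Complex

theorem ae_exp_neg_mul_eq_one_of_integral_eq_zero {π : Measure ℝ} {ζ : ℂ} (hζ : 0 ≤ ζ.re)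
    (hnonneg : ∀ᵐ (s : ℝ) ∂π, 0 ≤ s) (hint : Integrable (fun s : ℝ => 1 - exp (-ζ * s)) π)
    (h0 : ∫ s, (1 - exp (-ζ * s)) ∂π = 0) : ∀ᵐ (s : ℝ) ∂π, exp (-ζ * s) = 1 := by
  have hnorm : ∀ᵐ (s : ℝ) ∂π, ‖exp (-ζ * s)‖ ≤ 1 := by
    filter_upwards [hnonneg] with s hs
    exact norm_exp_le_one (by simpa using mul_nonneg hζ hs)
  have hre_nonneg : ∀ᵐ (s : ℝ) ∂π, 0 ≤ (1 - exp (-ζ * s)).re := by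
    filter_upwards [hnorm] with s hs
    simpa using (re_le_norm _).trans hs
  have hre_zero : (fun s : ℝ => (1 - exp (-ζ * s)).re) =ᵐ[π] 0 := by
    refine (integral_eq_zero_iff_of_nonneg_ae hre_nonneg hint.re).1 ?_
    exact (integral_re hint).trans (by rw [h0, RCLike.re_to_complex, zero_re])
  filter_upwards [hre_zero, hnorm] with s hre hs
  simp only [Pi.zero_apply, sub_re, one_re] at hre
  exact eq_one_of_norm_le_one_of_re_eq_one hs (by linarith)

theorem measSupport_subset_of_ae_mem {π : Measure ℝ} {C : Set ℝ} (hC : IsClosed C)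
    (h : ∀ᵐ x ∂π, x ∈ C) : measSupport π ⊆ C :=
  fun _ hx => by_contra fun hxC => hx _ hC.isOpen_compl hxC (ae_iff.1 h)

theorem discreteTopology_measSupport_of_ae_mem_zmultiples {π : Measure ℝ} {c : ℝ}
    (h : ∀ᵐ x ∂π, x ∈ AddSubgroup.zmultiples c) : DiscreteTopology (measSupport π) :=
  .of_subset (inferInstance : DiscreteTopology (AddSubgroup.zmultiples c))
    (measSupport_subset_of_ae_mem AddSubgroup.isClosed_of_discrete h)

theorem IsCNDF.re_nonneg {d : ℕ} {ψ : EuclideanSpace ℝ (Fin d) → ℂ} (hψ : IsCNDF ψ)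
    (ξ : EuclideanSpace ℝ (Fin d)) : 0 ≤ (ψ ξ).re := by
  obtain ⟨-, hψ0, hpd⟩ := hψ
  have : ‖exp (-ψ ξ)‖ ≤ 1 := norm_le_one_of_forall_nonneg (b := exp (-ψ (-ξ))) fun z => by
    have := hpd 1 zero_le_one 2 ![ξ, 0] ![1, z]
    simpa [Fin.sum_univ_two, hψ0, add_assoc] using this
  simpa [norm_exp] using this

theorem bernstein_zero_set_of_nondiscrete_support_general
    (π : Measure ℝ) (hπsupp : π {s | s ≤ 0} = 0)
    (hπnd : ¬ DiscreteTopology (measSupport π))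
    (g : ℂ → ℂ)
    (hint : ∀ ζ : ℂ, 0 ≤ ζ.re → Integrable (fun s : ℝ => 1 - Complex.exp (-ζ * s)) π)
    (hg : ∀ ζ : ℂ, 0 ≤ ζ.re → g ζ = ∫ s, (1 - Complex.exp (-ζ * s)) ∂π) :
    (∀ ζ : ℂ, 0 ≤ ζ.re → ζ ≠ 0 → g ζ ≠ 0) ∧
      ∀ (d : ℕ) (ψ : EuclideanSpace ℝ (Fin d) → ℂ), IsCNDF ψ →
        {ξ | g (ψ ξ) = 0} = {ξ | ψ ξ = 0} := by
  have hπnonneg : ∀ᵐ s ∂π, 0 ≤ s :=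
    ae_iff.2 <| measure_mono_null (fun _ hs => le_of_lt (not_le.1 hs)) hπsupp
  have hg_ne_zero : ∀ ζ : ℂ, 0 ≤ ζ.re → ζ ≠ 0 → g ζ ≠ 0 := by
    intro ζ hζ hζ0 hgζ
    have hexp := ae_exp_neg_mul_eq_one_of_integral_eq_zero hζ hπnonneg (hint ζ hζ)
      (hg ζ hζ ▸ hgζ)
    exact hπnd <| discreteTopology_measSupport_of_ae_mem_zmultiples <|
      hexp.mono fun _ => mem_zmultiples_of_exp_mul_eq_one (neg_ne_zero.2 hζ0)
  refine ⟨hg_ne_zero, fun d ψ hψ => Set.ext fun ξ => ⟨fun hgξ => ?_, fun (hψξ : ψ ξ = 0) => ?_⟩⟩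
  · by_contra hψξ
    exact hg_ne_zero _ (hψ.re_nonneg ξ) hψξ hgξ
  · simp [hψξ, hg 0 le_rfl]

/-- A driftless Bernstein function whose Lévy measure has non-discrete support has no
zero in the closed right half-plane apart from the origin; hence composing with a
continuous negative definite function does not change the zero set. -/
theorem bernstein_zero_set_of_nondiscrete_support
    (π : Measure ℝ) (hπsupp : π {s | s ≤ 0} = 0)
    (hπlevy : ∫⁻ s, ENNReal.ofReal (min s 1) ∂π < ⊤)
    (hπnd : ¬ DiscreteTopology (measSupport π))
    (g : ℂ → ℂ)
    (hint : ∀ ζ : ℂ, 0 ≤ ζ.re → Integrable (fun s : ℝ => 1 - Complex.exp (-ζ * s)) π)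
    (hg : ∀ ζ : ℂ, 0 ≤ ζ.re → g ζ = ∫ s, (1 - Complex.exp (-ζ * s)) ∂π) :
    (∀ ζ : ℂ, 0 ≤ ζ.re → ζ ≠ 0 → g ζ ≠ 0) ∧
      ∀ (d : ℕ) (ψ : EuclideanSpace ℝ (Fin d) → ℂ), IsCNDF ψ →
        {ξ | g (ψ ξ) = 0} = {ξ | ψ ξ = 0} :=
  bernstein_zero_set_of_nondiscrete_support_general π hπsupp hπnd g hint hg
end
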